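/- For every x ∈ 𝒳 and every w ∈ [0,1], the product measure Q_Y ⊗ Unif[0,1] of the set {(y,u) ∈ 𝒴 × [0,1] : p_c(x,y,u) < w} equals w; in other words, if Y ~ Q_Y and U ~ Unif[0,1] are independent, then the random variable p_c(x,Y,U) is uniformly distributed on [0,1]. -/

import Mathlib

open MeasureTheory

/-- The pairwise correct probability `p_c(x,y,u)` with respect to the pmf `Q` on `Y`:
`p_c(x,y,u) = Q{y' : d(x,y') < d(x,y)} + u * Q{y' : d(x,y') = d(x,y)}`. -/
noncomputable def pc {X Y : Type*} [Fintype Y] (Q : Y → ℝ) (d : X → Y → ℝ)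
    (x : X) (y : Y) (u : ℝ) : ℝ :=
  (∑ y' : Y, if d x y' < d x y then Q y' else 0)
    + u * (∑ y' : Y, if d x y' = d x y then Q y' else 0)

/-! Group `Y` by the level `t = d x y`. On a level of mass `b` with mass `A` strictly below it,
`p_c` runs linearly through `[A, A + b]` as `u` runs through `[0, 1]`, so the level contributes
`b * λ{u : A + u * b < w} = min w (A + b) - min w A`. The value `A + b` of one level is the value
`A` of the next, so the contributions telescope to `min w 1 - min w 0 = w`. -/

open Finset Set

namespace Finset

variable {ι α M G : Type*} [AddCommMonoid M]

theorem sum_filter_le_eq_sum_filter_lt_add [LinearOrder α] (s : Finset ι) (g : ι → α)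
    (Q : ι → M) (t : α) :
    ∑ i ∈ s with g i ≤ t, Q i = ∑ i ∈ s with g i < t, Q i + ∑ i ∈ s with g i = t, Q i := by
  classical
  rw [← sum_union (disjoint_filter.2 fun _ _ h => h.ne), ← filter_or]
  simp only [le_iff_lt_or_eq]

theorem sum_sub_filter_le_filter_lt_telescope [LinearOrder α] [AddCommGroup G] (f : M → G)
    (b : α → M) (s : Finset α) :
    ∑ t ∈ s, (f (∑ r ∈ s with r ≤ t, b r) - f (∑ r ∈ s with r < t, b r))
      = f (∑ r ∈ s, b r) - f 0 := by
  induction s using Finset.induction_on_max with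
  | empty => simp
  | insert a s hmax ih =>
    have ha : a ∉ s := fun h => lt_irrefl a (hmax a h)
    have hle : (insert a s).filter (· ≤ a) = insert a s :=
      filter_true_of_mem fun t ht => (mem_insert.1 ht).elim le_of_eq fun h => (hmax t h).le
    have hlt : (insert a s).filter (· < a) = s := by
      rw [filter_insert, if_neg (lt_irrefl a), filter_true_of_mem hmax]
    have hbelow : ∀ t ∈ s,
        f (∑ r ∈ insert a s with r ≤ t, b r) - f (∑ r ∈ insert a s with r < t, b r)
          = f (∑ r ∈ s with r ≤ t, b r) - f (∑ r ∈ s with r < t, b r) := fun t ht => by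
      rw [filter_insert, filter_insert, if_neg (hmax t ht).not_ge, if_neg (hmax t ht).not_gt]
    rw [sum_insert ha, hle, hlt, sum_insert ha, sum_congr rfl hbelow, ih]
    abel

section Fiberwise

variable [Fintype ι] [DecidableEq α]

theorem sum_filter_image_fiberwise (g : ι → α) (Q : ι → M) (p : α → Prop) [DecidablePred p] :
    ∑ t ∈ univ.image g with p t, ∑ i with g i = t, Q i = ∑ i with p (g i), Q i := by
  rw [sum_fiberwise_eq_sum_filter]
  congr 1
  ext i
  simp only [mem_filter, mem_univ, mem_image, true_and]
  exact ⟨fun ⟨_, h⟩ => h, fun h => ⟨⟨i, rfl⟩, h⟩⟩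

theorem sum_mul_comp_eq_sum_image {R : Type*} [NonUnitalNonAssocSemiring R] (g : ι → α)
    (Q : ι → R) (φ : α → R) :
    ∑ i, Q i * φ (g i) = ∑ t ∈ univ.image g, (∑ i with g i = t, Q i) * φ t := by
  refine (sum_image' _ fun i _ => ?_).symm
  rw [sum_mul]
  exact sum_congr rfl fun j hj => by rw [(mem_filter.1 hj).2]

end Fiberwise

theorem sum_image_sub_filter_le_filter_lt_telescope [LinearOrder α] [AddCommGroup G] [Fintype ι]
    (f : M → G) (g : ι → α) (Q : ι → M) :
    ∑ t ∈ univ.image g, (f (∑ i with g i ≤ t, Q i) - f (∑ i with g i < t, Q i))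
      = f (∑ i, Q i) - f 0 := by
  rw [sum_congr rfl fun t _ => by rw [← sum_filter_image_fiberwise g Q (· ≤ t),
      ← sum_filter_image_fiberwise g Q (· < t)],
    sum_sub_filter_le_filter_lt_telescope,
    sum_fiberwise_of_maps_to fun i _ => mem_image_of_mem g (mem_univ i)]

end Finset

theorem Real.toReal_volume_Icc_inter_Iio (c : ℝ) :
    (volume (Set.Icc 0 1 ∩ Iio c)).toReal = max (min 1 c) 0 := by
  rw [measure_congr ((Ico_ae_eq_Icc (μ := volume)).symm.inter (ae_eq_refl (Iio c))),
    Ico_inter_Iio, Real.volume_Ico, ENNReal.toReal_ofReal', sub_zero]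

theorem mul_toReal_volume_add_mul_lt {A B w : ℝ} (hB : 0 ≤ B) :
    B * (volume {u : ℝ | u ∈ Set.Icc 0 1 ∧ A + u * B < w}).toReal = min w (A + B) - min w A := by
  rcases hB.eq_or_lt with rfl | hB
  · simp
  have hset : {u : ℝ | u ∈ Set.Icc 0 1 ∧ A + u * B < w} = Set.Icc 0 1 ∩ Iio ((w - A) / B) := by
    ext u
    simp [lt_div_iff₀ hB, lt_sub_iff_add_lt']
  rw [hset, Real.toReal_volume_Icc_inter_Iio, mul_max_of_nonneg _ _ hB.le,
    mul_min_of_nonneg _ _ hB.le, mul_div_cancel₀ _ hB.ne', mul_one, mul_zero]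
  grind

theorem pc_eq_sum_filter {X Y : Type*} [Fintype Y] (Q : Y → ℝ) (d : X → Y → ℝ)
    (x : X) (y : Y) (u : ℝ) :
    pc Q d x y u = ∑ y' with d x y' < d x y, Q y' + u * ∑ y' with d x y' = d x y, Q y' := by
  simp only [pc, sum_filter]

theorem pc_uniform {X Y : Type*} [Fintype Y]
    (Q : Y → ℝ) (hQ0 : ∀ y, 0 ≤ Q y) (hQ1 : ∑ y : Y, Q y = 1)
    (d : X → Y → ℝ)
    (x : X) (w : ℝ) (hw : w ∈ Set.Icc (0:ℝ) 1) :
    ∑ y : Y, Q y *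
      (volume {u : ℝ | u ∈ Set.Icc (0:ℝ) 1 ∧ pc Q d x y u < w}).toReal = w := by
  classical
  let A (t : ℝ) := ∑ y with d x y < t, Q y
  let b (t : ℝ) := ∑ y with d x y = t, Q y
  calc ∑ y : Y, Q y * (volume {u : ℝ | u ∈ Set.Icc 0 1 ∧ pc Q d x y u < w}).toReal
      = ∑ y, Q y * (volume {u : ℝ | u ∈ Set.Icc 0 1 ∧ A (d x y) + u * b (d x y) < w}).toReal := by
        simp only [pc_eq_sum_filter, A, b]
    _ = ∑ t ∈ univ.image (d x),
          b t * (volume {u : ℝ | u ∈ Set.Icc 0 1 ∧ A t + u * b t < w}).toReal :=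
        sum_mul_comp_eq_sum_image (d x) Q fun t =>
          (volume {u : ℝ | u ∈ Set.Icc 0 1 ∧ A t + u * b t < w}).toReal
    _ = ∑ t ∈ univ.image (d x), (min w (∑ y with d x y ≤ t, Q y) - min w (A t)) :=
        sum_congr rfl fun t _ => by
          rw [sum_filter_le_eq_sum_filter_lt_add]
          exact mul_toReal_volume_add_mul_lt (sum_nonneg fun y _ => hQ0 y)
    _ = w := by
        rw [sum_image_sub_filter_le_filter_lt_telescope, hQ1, min_eq_left hw.2, min_eq_right hw.1,
          sub_zero]
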